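/- Let φ(z) = (az+b)/(cz+d) (a,b,c,d ∈ ℂ, ad−bc ≠ 0) be a linear fractional self-map of 𝔻 having a fixed point on the unit circle ∂𝔻, let σ(z) = (conj(a)·z − conj(c))/(−conj(b)·z + conj(d)), let β ∈ ℂ \ {0}, let ψ(z) = β·K_{σ(0)}(z), and let μ ∈ ℂ with |μ| = 1. If the weighted composition operator W_{ψ,φ} on H² is normal, then W_{ψ,φ} is J_μ-normal if and only if (conj(c)·d − conj(a)·b)·conj(μ) = conj(a)·c − conj(b)·d. -/

import Mathlib

open scoped ComplexConjugate InnerProductSpace ENNReal NNReal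
open Complex Metric

noncomputable section

abbrev H2 : Type := lp (fun _ : ℕ => ℂ) 2

namespace H2

/-- Evaluation of an element of `H²` (given by its sequence of Taylor coefficients)
at a point `z` of the unit disk: `f(z) = ∑ aₙ zⁿ`. -/
def eval (f : H2) (z : ℂ) : ℂ := ∑' n : ℕ, (f : ∀ _ : ℕ, ℂ) n * z ^ n

/-- The Szegő kernel function `K_w(z) = 1/(1 - conj w * z)`. -/
def ker (w z : ℂ) : ℂ := (1 - conj w * z)⁻¹

lemma kernel_memℓp (w : ℂ) (hw : ‖w‖ < 1) :
    Memℓp (fun n : ℕ => (conj w) ^ n) 2 := by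
  apply memℓp_gen
  have hsum : Summable (fun n : ℕ => (‖w‖ ^ 2) ^ n) :=
    summable_geometric_of_lt_one (by positivity) (by nlinarith [norm_nonneg w])
  refine hsum.congr fun n => ?_
  have h2 : ((2 : ℝ≥0∞).toReal) = ((2 : ℕ) : ℝ) := by simp
  rw [h2, Real.rpow_natCast]
  simp [norm_pow, ← pow_mul, Nat.mul_comm]

/-- The reproducing kernel of `H²` at `w` in the unit disk, as an element of `H²`. -/
def kernel (w : ℂ) : H2 :=
  if hw : ‖w‖ < 1 then ⟨fun n : ℕ => (conj w) ^ n, kernel_memℓp w hw⟩ else 0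

/-- `T` is the composition operator `C_φ` on `H²`. -/
def IsCompOp (φ : ℂ → ℂ) (T : H2 →L[ℂ] H2) : Prop :=
  ∀ f : H2, ∀ z : ℂ, ‖z‖ < 1 → eval (T f) z = eval f (φ z)

/-- `W` is the weighted composition operator `W_{ψ,φ}` on `H²`. -/
def IsWCompOp (ψ φ : ℂ → ℂ) (W : H2 →L[ℂ] H2) : Prop :=
  ∀ f : H2, ∀ z : ℂ, ‖z‖ < 1 → eval (W f) z = ψ z * eval f (φ z)

/-- A conjugation on `H²`: a conjugate-linear involution satisfying `⟪Cx, Cy⟫ = ⟪y, x⟫`. -/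
structure IsConjugation (C : H2 → H2) : Prop where
  map_add : ∀ x y : H2, C (x + y) = C x + C y
  map_smul : ∀ (c : ℂ) (x : H2), C (c • x) = conj c • C x
  invol : ∀ x : H2, C (C x) = x
  inner_conj : ∀ x y : H2, ⟪C x, C y⟫_ℂ = ⟪y, x⟫_ℂ

/-- `T` is `C`-normal: `C T* T C = T T*`. -/
def CNormal (C : H2 → H2) (T : H2 →L[ℂ] H2) : Prop :=
  ∀ x : H2, C ((ContinuousLinearMap.adjoint T) (T (C x)))
      = T ((ContinuousLinearMap.adjoint T) x)

/-- `T` is a normal operator: `T* T = T T*`. -/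
def IsNormalOp (T : H2 →L[ℂ] H2) : Prop :=
  (ContinuousLinearMap.adjoint T).comp T = T.comp (ContinuousLinearMap.adjoint T)

/-- `T` is a unitary operator. -/
def IsUnitaryOp (T : H2 →L[ℂ] H2) : Prop :=
  T.comp (ContinuousLinearMap.adjoint T) = ContinuousLinearMap.id ℂ H2 ∧
  (ContinuousLinearMap.adjoint T).comp T = ContinuousLinearMap.id ℂ H2

/-- `C` is the conjugation `J_μ` on `H²`: `(J_μ f)(z) = conj (f (μ * conj z))`. -/
def IsJmu (μ : ℂ) (C : H2 → H2) : Prop :=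
  ∀ f : H2, ∀ z : ℂ, ‖z‖ < 1 → eval (C f) z = conj (eval f (μ * conj z))

/-- `ξ_p(z) = √(1-|p|²) / (1 - conj p * z)`. -/
def xi (p z : ℂ) : ℂ := (Real.sqrt (1 - ‖p‖ ^ 2) : ℂ) / (1 - conj p * z)

/-- `τ_p(z) = λ (p - z) / (1 - conj p * z)`. -/
def tau (p lam z : ℂ) : ℂ := lam * (p - z) / (1 - conj p * z)

/-- `C` is the conjugation `J W_{ξ_p, τ_p}` on `H²`:
`(C f)(z) = conj (ξ_p(conj z) * f (τ_p (conj z)))`. -/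
def IsJW (p lam : ℂ) (C : H2 → H2) : Prop :=
  ∀ f : H2, ∀ z : ℂ, ‖z‖ < 1 →
    eval (C f) z = conj (xi p (conj z) * eval f (tau p lam (conj z)))

end H2

/-!
Everything is tested on the reproducing kernels `K_w`. For `φ(z) = (az + b)/(cz + d)` and
`ψ(z) = βd/(cz + d)`, the function `W W* K_w` is `z ↦ |βd|² / D(w, z)` with
`D(w, z) = conj(cw + d)(cz + d) - conj(aw + b)(az + b)`. Since `ψ = β K_{σ(0)}` is itself
`W K₀`, also `W* W K₀` is explicit, and normality forces
`conj a c - conj b d = c conj d - a conj b`.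
The conjugation `J_μ` sends `K_w` to `K_{μ conj w}`; as `W* W = W W*` is self-adjoint,
`J_μ W* W J_μ = W W*` may be tested on kernels, where it reads `conj D(μ w̄, μ z̄) = D(w, z)`:
a condition on the coefficients that is the stated one.
-/

open scoped InnerProduct

lemma norm_mul_conj_lt_one {μ w : ℂ} (hμ : ‖μ‖ = 1) (hw : ‖w‖ < 1) : ‖μ * conj w‖ < 1 := by
  rwa [norm_mul, RCLike.norm_conj, hμ, one_mul]

namespace H2

lemma hasSum_eval (f : H2) {z : ℂ} (hz : ‖z‖ < 1) :
    HasSum (fun n : ℕ => (f : ∀ _ : ℕ, ℂ) n * z ^ n) (eval f z) := by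
  refine (Summable.of_norm_bounded
    ((summable_geometric_of_lt_one (norm_nonneg z) hz).mul_left ‖f‖) fun n => ?_).hasSum
  rw [norm_mul, norm_pow]
  gcongr
  exact lp.norm_apply_le_norm two_ne_zero f n

lemma hasFPowerSeriesOnBall_eval (f : H2) :
    HasFPowerSeriesOnBall (eval f) (FormalMultilinearSeries.ofScalars ℂ (f : ∀ _ : ℕ, ℂ)) 0 1 where
  r_le := by
    refine FormalMultilinearSeries.le_radius_of_bound _ ‖f‖ fun n => ?_
    rw [FormalMultilinearSeries.ofScalars_norm, NNReal.coe_one, one_pow, mul_one]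
    exact lp.norm_apply_le_norm two_ne_zero f n
  r_pos := one_pos
  hasSum {y} hy := by
    have hy' : ‖y‖ < 1 := by
      simpa [← ENNReal.coe_one, enorm_lt_coe, ← NNReal.coe_lt_one] using hy
    simpa [FormalMultilinearSeries.ofScalars_apply_eq, mul_comm] using hasSum_eval f hy'

lemma eval_ext {f g : H2} (h : ∀ z : ℂ, ‖z‖ < 1 → eval f z = eval g z) : f = g := by
  have heq : eval f =ᶠ[nhds 0] eval g := by
    filter_upwards [ball_mem_nhds (0 : ℂ) one_pos] with z hz
    exact h z (mem_ball_zero_iff.mp hz)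
  have := (hasFPowerSeriesOnBall_eval f).hasFPowerSeriesAt.eq_formalMultilinearSeries_of_eventually
    (hasFPowerSeriesOnBall_eval g).hasFPowerSeriesAt heq
  exact lp.ext ((FormalMultilinearSeries.ofScalars_series_eq_iff _ _ _).mp this)

lemma eval_smul (α : ℂ) (f : H2) (z : ℂ) : eval (α • f) z = α * eval f z := by
  simp only [eval, lp.coeFn_smul, Pi.smul_apply, smul_eq_mul, ← tsum_mul_left, mul_assoc]

lemma kernel_apply {w : ℂ} (hw : ‖w‖ < 1) (n : ℕ) :
    (kernel w : ∀ _ : ℕ, ℂ) n = conj w ^ n := by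
  rw [kernel, dif_pos hw]

lemma eval_kernel {w z : ℂ} (hw : ‖w‖ < 1) (hz : ‖z‖ < 1) : eval (kernel w) z = ker w z := by
  have hwz : ‖conj w * z‖ < 1 := by
    rw [norm_mul, RCLike.norm_conj]
    nlinarith [norm_nonneg w, norm_nonneg z]
  simp only [eval, ker, kernel_apply hw, ← mul_pow]
  exact tsum_geometric_of_norm_lt_one hwz

lemma inner_kernel {w : ℂ} (hw : ‖w‖ < 1) (f : H2) : ⟪kernel w, f⟫_ℂ = eval f w := by
  rw [lp.inner_eq_tsum, eval]
  refine tsum_congr fun n => ?_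
  rw [RCLike.inner_apply, kernel_apply hw, map_pow, conj_conj]

section WeightedComposition

variable {ψ φ : ℂ → ℂ} {W : H2 →L[ℂ] H2}

lemma IsWCompOp.adjoint_kernel (hW : IsWCompOp ψ φ W) (hself : ∀ z : ℂ, ‖z‖ < 1 → ‖φ z‖ < 1)
    {w : ℂ} (hw : ‖w‖ < 1) : (W†) (kernel w) = conj (ψ w) • kernel (φ w) := by
  refine ext_inner_left ℂ fun f => ?_
  rw [ContinuousLinearMap.adjoint_inner_right, inner_smul_right, ← inner_conj_symm,
    inner_kernel hw, hW f w hw, map_mul, ← inner_conj_symm, inner_kernel (hself w hw)]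

lemma IsWCompOp.eval_apply_adjoint_kernel (hW : IsWCompOp ψ φ W)
    (hself : ∀ z : ℂ, ‖z‖ < 1 → ‖φ z‖ < 1) {w z : ℂ} (hw : ‖w‖ < 1) (hz : ‖z‖ < 1) :
    eval (W ((W†) (kernel w))) z = conj (ψ w) * ψ z * ker (φ w) (φ z) := by
  rw [hW.adjoint_kernel hself hw, map_smul, eval_smul, hW _ z hz,
    eval_kernel (hself w hw) (hself z hz), mul_assoc]

lemma IsWCompOp.eval_apply_kernel_zero (hW : IsWCompOp ψ φ W)
    (hself : ∀ z : ℂ, ‖z‖ < 1 → ‖φ z‖ < 1) {z : ℂ} (hz : ‖z‖ < 1) :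
    eval (W (kernel 0)) z = ψ z := by
  rw [hW _ z hz, eval_kernel (by simp) (hself z hz)]
  simp [ker]

lemma IsNormalOp.cNormal_iff (hnormal : IsNormalOp W) (C : H2 → H2) :
    CNormal C W ↔ ∀ x, C ((W ∘L W†) (C x)) = (W ∘L W†) x := by
  have hswap (x : H2) : (W†) (W x) = W ((W†) x) := DFunLike.congr_fun hnormal x
  simp only [CNormal, hswap, ContinuousLinearMap.comp_apply]

end WeightedComposition

lemma IsJmu.apply_kernel {μ : ℂ} {C : H2 → H2} (hC : IsJmu μ C) (hμ : ‖μ‖ = 1) {w : ℂ}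
    (hw : ‖w‖ < 1) : C (kernel w) = kernel (μ * conj w) := by
  refine eval_ext fun z hz => ?_
  rw [hC _ z hz, eval_kernel hw (norm_mul_conj_lt_one hμ hz),
    eval_kernel (norm_mul_conj_lt_one hμ hw) hz]
  simp only [ker, map_inv₀, map_sub, map_one, map_mul, conj_conj]
  ring_nf

lemma IsConjugation.forall_eq_iff_eval_kernel {C : H2 → H2} (hC : IsConjugation C)
    {T : H2 →L[ℂ] H2} (hT : IsSelfAdjoint T) :
    (∀ x, C (T (C x)) = T x) ↔
      ∀ w z : ℂ, ‖w‖ < 1 → ‖z‖ < 1 → eval (C (T (C (kernel w)))) z = eval (T (kernel w)) z := by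
  refine ⟨fun h w z _ _ => by rw [h], fun h x => eval_ext fun z hz => ?_⟩
  have hsymm := hT.isSymmetric
  calc eval (C (T (C x))) z
      = ⟪C (C (kernel z)), C (T (C x))⟫_ℂ := by rw [hC.invol, inner_kernel hz]
    _ = ⟪C x, T (C (kernel z))⟫_ℂ := by rw [hC.inner_conj]; exact hsymm _ _
    _ = ⟪C (T (C (kernel z))), x⟫_ℂ := by rw [← hC.inner_conj, hC.invol]
    _ = ⟪kernel z, T x⟫_ℂ := by rw [eval_ext (h z · hz)]; exact hsymm _ _
    _ = eval (T x) z := inner_kernel hz _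

end H2

section LinearFractional

variable {a b c d : ℂ}

def lftKernelDen (a b c d w z : ℂ) : ℂ :=
  conj (c * w + d) * (c * z + d) - conj (a * w + b) * (a * z + b)

lemma norm_add_le_of_mapsTo_ball (hden : ∀ z : ℂ, ‖z‖ < 1 → c * z + d ≠ 0)
    (hself : ∀ z : ℂ, ‖z‖ < 1 → ‖(a * z + b) / (c * z + d)‖ < 1) {ζ : ℂ} (hζ : ‖ζ‖ ≤ 1) :
    ‖a * ζ + b‖ ≤ ‖c * ζ + d‖ := by
  have hball : ball (0 : ℂ) 1 ⊆ {z | ‖a * z + b‖ ≤ ‖c * z + d‖} := fun z hz => by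
    rw [mem_ball_zero_iff] at hz
    have := hself z hz
    rw [norm_div, div_lt_one (norm_pos_iff.mpr (hden z hz))] at this
    exact this.le
  have hclosed : IsClosed {z : ℂ | ‖a * z + b‖ ≤ ‖c * z + d‖} :=
    isClosed_le (by fun_prop) (by fun_prop)
  have := closure_minimal hball hclosed
  rw [closure_ball (0 : ℂ) one_ne_zero] at this
  exact this (mem_closedBall_zero_iff.mpr hζ)

/-- A pole of `(a z + b) / (c z + d)` on the unit circle would be a zero of `a z + b`,
forcing `a d - b c = 0`. -/
lemma norm_lt_norm_of_mapsTo_ball (hdet : a * d - b * c ≠ 0)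
    (hden : ∀ z : ℂ, ‖z‖ < 1 → c * z + d ≠ 0)
    (hself : ∀ z : ℂ, ‖z‖ < 1 → ‖(a * z + b) / (c * z + d)‖ < 1) : ‖c‖ < ‖d‖ := by
  have hd : d ≠ 0 := by simpa using hden 0 (by simp)
  by_contra! hdc
  have hc : c ≠ 0 := by
    rintro rfl
    exact hd (norm_le_zero_iff.mp (by simpa using hdc))
  have hpole : c * (-d / c) + d = 0 := by field_simp; ring
  have hζ : ‖-d / c‖ ≤ 1 := by
    rw [norm_div, norm_neg]
    exact div_le_one_of_le₀ hdc (norm_nonneg c)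
  have hzero := norm_add_le_of_mapsTo_ball hden hself hζ
  rw [hpole, norm_zero, norm_le_zero_iff] at hzero
  apply hdet
  field_simp at hzero
  linear_combination -hzero

lemma ker_neg_conj_div_conj (hd : d ≠ 0) (z : ℂ) :
    H2.ker (-conj c / conj d) z = d * (c * z + d)⁻¹ := by
  rw [H2.ker, map_div₀, map_neg, conj_conj, conj_conj]
  field_simp
  ring

lemma conj_mul_mul_ker_eq_lftKernelDen (β : ℂ) {w z : ℂ} (hw : c * w + d ≠ 0)
    (hz : c * z + d ≠ 0) :
    conj (β * d * (c * w + d)⁻¹) * (β * d * (c * z + d)⁻¹)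
        * H2.ker ((a * w + b) / (c * w + d)) ((a * z + b) / (c * z + d))
      = β * conj β * (d * conj d) * (lftKernelDen a b c d w z)⁻¹ := by
  have hw' : conj (c * w + d) ≠ 0 := (map_ne_zero _).mpr hw
  have hD : lftKernelDen a b c d w z = conj (c * w + d) * (c * z + d)
      * (1 - conj ((a * w + b) / (c * w + d)) * ((a * z + b) / (c * z + d))) := by
    rw [lftKernelDen, map_div₀]
    field_simp
  rw [hD, H2.ker]
  simp only [map_mul, map_inv₀, mul_inv]
  field_simp

/-- `-conj c / conj d` is `σ 0`, and for `ψ = β K_{σ 0}` the left side is `eval (W* (W K₀)) z`. -/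
lemma mul_conj_mul_ker_at_neg_conj_div_conj (β z : ℂ) (hd : d ≠ 0)
    (hN : d * conj d - c * conj c ≠ 0) :
    β * conj (β * d * (c * (-conj c / conj d) + d)⁻¹)
        * H2.ker ((a * (-conj c / conj d) + b) / (c * (-conj c / conj d) + d)) z
      = β * conj β * (d * conj d)
        * (d * conj d - c * conj c - (conj b * d - conj a * c) * z)⁻¹ := by
  have hd' : conj d ≠ 0 := (map_ne_zero _).mpr hd
  set N := d * conj d - c * conj c with hNdef
  have hcs : c * (-conj c / conj d) + d = N / conj d := by
    rw [hNdef]; field_simp; ring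
  have hN' : conj N = N := by
    simp only [hNdef, map_sub, map_mul, conj_conj]; ring
  have hψs : conj (β * d * (c * (-conj c / conj d) + d)⁻¹) = conj β * (d * conj d) / N := by
    rw [hcs, inv_div, map_mul, map_mul, map_div₀, hN', conj_conj]; ring
  have hφs : conj ((a * (-conj c / conj d) + b) / (c * (-conj c / conj d) + d))
      = (conj b * d - conj a * c) / N := by
    rw [hcs, map_div₀, map_div₀, hN', map_add, map_mul, map_div₀, map_neg, conj_conj, conj_conj]
    field_simp
    ring
  have hden : 1 - (conj b * d - conj a * c) / N * z = (N - (conj b * d - conj a * c) * z) / N := by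
    field_simp
  rw [H2.ker, hψs, hφs, hden, inv_div]
  field_simp

lemma conj_lftKernelDen_rotate_iff {μ : ℂ} (hμ : μ * conj μ = 1) :
    (∀ w z : ℂ, ‖w‖ < 1 → ‖z‖ < 1 →
      conj (lftKernelDen a b c d (μ * conj w) (μ * conj z)) = lftKernelDen a b c d w z) ↔
    (conj c * d - conj a * b) * conj μ = c * conj d - a * conj b := by
  simp only [lftKernelDen, map_sub, map_mul, map_add, conj_conj]
  constructor
  · intro h
    have := h 0 (1 / 2) (by simp) (by norm_num)
    simp only [map_zero] at this
    linear_combination 2 * this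
  · intro h w z _ _
    linear_combination z * h - conj w * μ * h
      + (conj w * (conj c * d - conj a * b) + conj w * z * (c * conj c - a * conj a)) * hμ

end LinearFractional

namespace H2.IsWCompOp

variable {a b c d β : ℂ} {φ ψ : ℂ → ℂ} {W : H2 →L[ℂ] H2}

lemma eval_apply_adjoint_kernel_lft (hφ : ∀ z : ℂ, φ z = (a * z + b) / (c * z + d))
    (hψ : ∀ z : ℂ, ψ z = β * d * (c * z + d)⁻¹) (hW : IsWCompOp ψ φ W)
    (hden : ∀ z : ℂ, ‖z‖ < 1 → c * z + d ≠ 0) (hself : ∀ z : ℂ, ‖z‖ < 1 → ‖φ z‖ < 1)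
    {w z : ℂ} (hw : ‖w‖ < 1) (hz : ‖z‖ < 1) :
    eval (W ((W†) (kernel w))) z = β * conj β * (d * conj d) * (lftKernelDen a b c d w z)⁻¹ := by
  rw [hW.eval_apply_adjoint_kernel hself hw hz, hψ, hψ, hφ, hφ,
    conj_mul_mul_ker_eq_lftKernelDen β (hden w hw) (hden z hz)]

lemma conj_mul_sub_eq_of_isNormalOp (hφ : ∀ z : ℂ, φ z = (a * z + b) / (c * z + d))
    (hψ : ∀ z : ℂ, ψ z = β * d * (c * z + d)⁻¹) (hW : IsWCompOp ψ φ W)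
    (hden : ∀ z : ℂ, ‖z‖ < 1 → c * z + d ≠ 0) (hself : ∀ z : ℂ, ‖z‖ < 1 → ‖φ z‖ < 1)
    (hcd : ‖c‖ < ‖d‖) (hβ : β ≠ 0) (hnormal : IsNormalOp W) :
    conj a * c - conj b * d = c * conj d - a * conj b := by
  have hd : d ≠ 0 := by simpa using hden 0 (by simp)
  set s := -conj c / conj d with hsdef
  have hs : ‖s‖ < 1 := by
    rwa [hsdef, norm_div, norm_neg, RCLike.norm_conj, RCLike.norm_conj,
      div_lt_one (norm_pos_iff.mpr hd)]
  have hN : d * conj d - c * conj c ≠ 0 := by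
    rw [mul_conj, mul_conj, ← ofReal_sub, ofReal_ne_zero, normSq_eq_norm_sq, normSq_eq_norm_sq]
    nlinarith [norm_nonneg c]
  have hX : β * conj β * (d * conj d) ≠ 0 := by simp [hβ, hd]
  have hW0 : W (kernel 0) = β • kernel s := eval_ext fun z hz => by
    rw [hW.eval_apply_kernel_zero hself hz, eval_smul, eval_kernel hs hz,
      ker_neg_conj_div_conj hd, hψ, mul_assoc]
  have hden_eq (z : ℂ) (hz : ‖z‖ < 1) :
      d * conj d - c * conj c - (conj b * d - conj a * c) * z = lftKernelDen a b c d 0 z := by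
    have h := congrArg (eval · z) (DFunLike.congr_fun hnormal (kernel 0))
    simp only [ContinuousLinearMap.comp_apply] at h
    rw [hW0, map_smul, eval_smul, hW.adjoint_kernel hself hs, eval_smul,
      eval_kernel (hself s hs) hz, ← mul_assoc, hψ s, hφ s,
      mul_conj_mul_ker_at_neg_conj_div_conj β z hd hN,
      eval_apply_adjoint_kernel_lft hφ hψ hW hden hself (by simp) hz] at h
    exact inv_injective (mul_left_cancel₀ hX h)
  have h0 := hden_eq 0 (by simp)
  have h1 := hden_eq (1 / 2) (by norm_num)
  simp only [lftKernelDen, mul_zero, zero_add] at h0 h1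
  linear_combination 2 * h1 - 2 * h0

end H2.IsWCompOp

theorem stmt12_general (a b c d β μ : ℂ) (hβ : β ≠ 0) (hμ : ‖μ‖ = 1)
    (φ : ℂ → ℂ) (hφ : ∀ z : ℂ, φ z = (a * z + b) / (c * z + d))
    (hdet : a * d - b * c ≠ 0)
    (hden : ∀ z : ℂ, ‖z‖ < 1 → c * z + d ≠ 0)
    (hself : ∀ z : ℂ, ‖z‖ < 1 → ‖φ z‖ < 1)
    (σ : ℂ → ℂ) (hσ : ∀ z : ℂ, σ z = (conj a * z - conj c) / (-(conj b) * z + conj d))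
    (ψ : ℂ → ℂ) (hψ : ∀ z : ℂ, ψ z = β * H2.ker (σ 0) z)
    (W : H2 →L[ℂ] H2) (hW : H2.IsWCompOp ψ φ W)
    (hnormal : H2.IsNormalOp W)
    (C : H2 → H2) (hC : H2.IsConjugation C) (hCμ : H2.IsJmu μ C) :
    H2.CNormal C W ↔ (conj c * d - conj a * b) * conj μ = conj a * c - conj b * d := by
  have hd : d ≠ 0 := by simpa using hden 0 (by simp)
  have hσ0 : σ 0 = -conj c / conj d := by simp [hσ]
  have hψ' (z : ℂ) : ψ z = β * d * (c * z + d)⁻¹ := by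
    rw [hψ, hσ0, ker_neg_conj_div_conj hd, mul_assoc]
  have hcd : ‖c‖ < ‖d‖ := norm_lt_norm_of_mapsTo_ball hdet hden fun z hz => hφ z ▸ hself z hz
  have hμ1 : μ * conj μ = 1 := by rw [mul_conj, normSq_eq_norm_sq, hμ]; norm_num
  have hX : β * conj β * (d * conj d) ≠ 0 := by simp [hβ, hd]
  have hXreal : conj (β * conj β * (d * conj d)) = β * conj β * (d * conj d) := by
    simp only [map_mul, conj_conj]; ring
  have hT {w z : ℂ} (hw : ‖w‖ < 1) (hz : ‖z‖ < 1) :=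
    hW.eval_apply_adjoint_kernel_lft hφ hψ' hden hself hw hz
  have hWW : IsSelfAdjoint (W ∘L W†) := IsSelfAdjoint.mul_star_self W
  rw [hnormal.cNormal_iff, hC.forall_eq_iff_eval_kernel hWW,
    hW.conj_mul_sub_eq_of_isNormalOp hφ hψ' hden hself hcd hβ hnormal,
    ← conj_lftKernelDen_rotate_iff hμ1]
  refine forall₄_congr fun w z hw hz => ?_
  simp only [ContinuousLinearMap.comp_apply]
  rw [hCμ _ z hz, hCμ.apply_kernel hμ hw,
    hT (norm_mul_conj_lt_one hμ hw) (norm_mul_conj_lt_one hμ hz), hT hw hz, map_mul, map_inv₀,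
    hXreal, mul_right_inj' hX, inv_inj]

/-- Let `φ` be a linear fractional self-map of `𝔻` with a fixed point on `∂𝔻`, and
`ψ = β K_{σ(0)}`. If `W_{ψ,φ}` is normal, then `W_{ψ,φ}` is `J_μ`-normal iff
`(conj c * d - conj a * b) conj μ = conj a * c - conj b * d`. -/
theorem stmt12 (a b c d β μ : ℂ) (hβ : β ≠ 0) (hμ : ‖μ‖ = 1)
    (φ : ℂ → ℂ) (hφ : ∀ z : ℂ, φ z = (a * z + b) / (c * z + d))
    (hdet : a * d - b * c ≠ 0)
    (hden : ∀ z : ℂ, ‖z‖ < 1 → c * z + d ≠ 0)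
    (hself : ∀ z : ℂ, ‖z‖ < 1 → ‖φ z‖ < 1)
    (hfix : ∃ ζ : ℂ, ‖ζ‖ = 1 ∧ (a * ζ + b) / (c * ζ + d) = ζ)
    (σ : ℂ → ℂ) (hσ : ∀ z : ℂ, σ z = (conj a * z - conj c) / (-(conj b) * z + conj d))
    (ψ : ℂ → ℂ) (hψ : ∀ z : ℂ, ψ z = β * H2.ker (σ 0) z)
    (W : H2 →L[ℂ] H2) (hW : H2.IsWCompOp ψ φ W)
    (hnormal : H2.IsNormalOp W)
    (C : H2 → H2) (hC : H2.IsConjugation C) (hCμ : H2.IsJmu μ C) :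
    H2.CNormal C W ↔ (conj c * d - conj a * b) * conj μ = conj a * c - conj b * d :=
  stmt12_general a b c d β μ hβ hμ φ hφ hdet hden hself σ hσ ψ hψ W hW hnormal C hC hCμ
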